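/- Suppose the step sizes (α_k)_{k∈ℕ} ⊂ (0,1) form a monotone nonincreasing sequence and that α_{k₀} < 2/L for some index k₀. Then there exist constants C₁, C₂ > 0 (depending only on f, x_0, f⋆, L, σ², b and the sequence (α_k) up to index k₀) such that for every integer K ≥ 1, (1/K) ∑_{k=0}^{K−1} E[‖∇f(x_k)‖²] ≤ (C₁ + (C₂ σ² / b) ∑_{k=0}^{K−1} α_k²) · 1/(K α_{K−1}). -/

import Mathlib

/-!
Along `x_{k+1} = x_k - α_k g_k`, the descent inequality of an `L`-smooth function, averaged with
the unbiasedness and the variance bound of `g_k`, gives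
`E f(x_{k+1}) ≤ E f(x_k) - α_k (1 - L α_k / 2) E‖∇f(x_k)‖² + L α_k² σ² / (2b)`.
Since the step sizes decrease, `1 - L α_k / 2 ≥ 1 - L α_{k₀} / 2 > 0` for `k ≥ k₀`, so telescoping
against `f ≥ f⋆` bounds `∑_{k₀ ≤ k < K} α_k E‖∇f(x_k)‖²`; the first `k₀` terms go into `C₁`, and
`α_k ≥ α_{K-1}` for `k < K` turns the weighted sum into the averaged one.
-/

open MeasureTheory ProbabilityTheory Filter RealInnerProductSpace

section SGDStep

variable {H : Type*} [NormedAddCommGroup H] [InnerProductSpace ℝ H]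

theorem image_add_le_of_lipschitzWith_gradient [CompleteSpace H] {f : H → ℝ}
    (hf : Differentiable ℝ f) {L : NNReal} (hLip : LipschitzWith L (gradient f)) (x v : H) :
    f (x + v) ≤ f x + ⟪gradient f x, v⟫ + L / 2 * ‖v‖ ^ 2 := by
  -- The claim is `ψ 1 ≤ ψ 0`, and `ψ` is antitone on `[0, ∞)` because `∇f` is `L`-Lipschitz.
  set ψ : ℝ → ℝ := fun t => f (x + t • v) - t * ⟪gradient f x, v⟫ - L / 2 * t ^ 2 * ‖v‖ ^ 2
  have hψ : ∀ t, HasDerivAt ψ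
      (⟪gradient f (x + t • v) - gradient f x, v⟫ - L * t * ‖v‖ ^ 2) t := by
    intro t
    have hline : HasDerivAt (fun t : ℝ => x + t • v) v t := by
      simpa using ((hasDerivAt_id t).smul_const v).const_add x
    have hfline := (hf (x + t • v)).hasFDerivAt.comp_hasDerivAt t hline
    rw [← inner_gradient_left] at hfline
    refine ((hfline.sub ((hasDerivAt_id t).mul_const ⟪gradient f x, v⟫)).sub
      (((hasDerivAt_pow 2 t).const_mul (L / 2 : ℝ)).mul_const (‖v‖ ^ 2))).congr_deriv ?_
    rw [inner_sub_left]
    simp only [one_mul, Nat.cast_ofNat]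
    ring
  have hanti : AntitoneOn ψ (Set.Ici 0) := by
    refine antitoneOn_of_hasDerivWithinAt_nonpos (convex_Ici 0)
      (fun t _ => (hψ t).continuousAt.continuousWithinAt) (fun t _ => (hψ t).hasDerivWithinAt)
      fun t ht => ?_
    rw [interior_Ici, Set.mem_Ioi] at ht
    have hgrad : ‖gradient f (x + t • v) - gradient f x‖ ≤ L * (t * ‖v‖) := by
      simpa [dist_eq_norm, norm_smul, abs_of_pos ht] using hLip.dist_le_mul (x + t • v) x
    rw [sub_nonpos]
    calc ⟪gradient f (x + t • v) - gradient f x, v⟫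
        ≤ ‖gradient f (x + t • v) - gradient f x‖ * ‖v‖ := real_inner_le_norm _ _
      _ ≤ L * (t * ‖v‖) * ‖v‖ := by gcongr
      _ = L * t * ‖v‖ ^ 2 := by ring
  have hψ01 : ψ 1 ≤ ψ 0 := hanti Set.self_mem_Ici (Set.mem_Ici.2 zero_le_one) zero_le_one
  simp only [ψ, zero_smul, one_smul, add_zero] at hψ01
  linarith

variable {Ω : Type*} {m m₀ : MeasurableSpace Ω} {μ : Measure Ω}

theorem MeasureTheory.MemLp.integrable_inner {a g : Ω → H} (ha : MemLp a 2 μ)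
    (hg : MemLp g 2 μ) : Integrable (fun ω => ⟪a ω, g ω⟫) μ :=
  (L2.integrable_inner (ha.toLp a) (hg.toLp g)).congr <| by
    filter_upwards [ha.coeFn_toLp, hg.coeFn_toLp] with ω ha' hg'
    rw [ha', hg']

theorem integral_inner_condExp_right [CompleteSpace H] (hm : m ≤ m₀) [SigmaFinite (μ.trim hm)]
    {a g : Ω → H} (ha : StronglyMeasurable[m] a) (hag : Integrable (fun ω => ⟪a ω, g ω⟫) μ)
    (hg : Integrable g μ) :
    ∫ ω, ⟪a ω, μ[g | m] ω⟫ ∂μ = ∫ ω, ⟪a ω, g ω⟫ ∂μ := by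
  rw [← integral_condExp hm (f := fun ω => ⟪a ω, g ω⟫)]
  exact integral_congr_ae
    (condExp_bilin_of_stronglyMeasurable_left (innerSL ℝ) ha hag hg).symm

theorem integral_le_of_condExp_le [IsProbabilityMeasure μ] (hm : m ≤ m₀) {φ : Ω → ℝ} {s : ℝ}
    (hφ : ∀ᵐ ω ∂μ, μ[φ | m] ω ≤ s) : ∫ ω, φ ω ∂μ ≤ s := by
  rw [← integral_condExp hm]
  simpa using integral_mono_ae integrable_condExp (integrable_const s) hφ

theorem integral_norm_sub_sq_eq {a g : Ω → H} (ha : MemLp a 2 μ) (hg : MemLp g 2 μ)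
    (hinner : ∫ ω, ⟪a ω, g ω⟫ ∂μ = ∫ ω, ‖a ω‖ ^ 2 ∂μ) :
    ∫ ω, ‖g ω - a ω‖ ^ 2 ∂μ = ∫ ω, ‖g ω‖ ^ 2 ∂μ - ∫ ω, ‖a ω‖ ^ 2 ∂μ := by
  have ha2 := ha.integrable_norm_pow two_ne_zero
  have hg2 := hg.integrable_norm_pow two_ne_zero
  have hag := (ha.integrable_inner hg).const_mul 2
  have hdiff : Integrable (fun ω => ‖g ω‖ ^ 2 - 2 * ⟪a ω, g ω⟫) μ := hg2.sub hag
  simp_rw [norm_sub_sq_real, real_inner_comm (a _)]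
  rw [integral_add hdiff ha2, integral_sub hg2 hag, integral_const_mul, hinner]
  ring

theorem integral_sgd_step_le [CompleteSpace H] [IsProbabilityMeasure μ] (hm : m ≤ m₀)
    {f : H → ℝ} (hf : Differentiable ℝ f) {L : NNReal} (hLip : LipschitzWith L (gradient f))
    {x g : Ω → H} (α s : ℝ) (hx : StronglyMeasurable[m] x) (hg : MemLp g 2 μ)
    (hgrad : Integrable (fun ω => ‖gradient f (x ω)‖ ^ 2) μ)
    (hmean : μ[g | m] =ᵐ[μ] fun ω => gradient f (x ω))
    (hvar : ∀ᵐ ω ∂μ, μ[fun ω' => ‖g ω' - gradient f (x ω')‖ ^ 2 | m] ω ≤ s)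
    (hfx : Integrable (fun ω => f (x ω)) μ) (hfx' : Integrable (fun ω => f (x ω - α • g ω)) μ) :
    ∫ ω, f (x ω - α • g ω) ∂μ ≤ ∫ ω, f (x ω) ∂μ
      - α * (1 - L * α / 2) * ∫ ω, ‖gradient f (x ω)‖ ^ 2 ∂μ + L * α ^ 2 / 2 * s := by
  set a : Ω → H := fun ω => gradient f (x ω)
  have ha_meas : StronglyMeasurable[m] a := hLip.continuous.comp_stronglyMeasurable hx
  have ha : MemLp a 2 μ :=
    (memLp_two_iff_integrable_sq_norm (ha_meas.mono hm).aestronglyMeasurable).2 hgrad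
  have hag := ha.integrable_inner hg
  have hinner : ∫ ω, ⟪a ω, g ω⟫ ∂μ = ∫ ω, ‖a ω‖ ^ 2 ∂μ := by
    rw [← integral_inner_condExp_right hm ha_meas hag (hg.integrable one_le_two)]
    refine integral_congr_ae (hmean.mono fun ω hω => ?_)
    simp only [hω, real_inner_self_eq_norm_sq]
  have hsecond : ∫ ω, ‖g ω‖ ^ 2 ∂μ ≤ ∫ ω, ‖a ω‖ ^ 2 ∂μ + s := by
    have := integral_norm_sub_sq_eq ha hg hinner
    linarith [integral_le_of_condExp_le hm hvar]
  have hpointwise : ∀ ω, f (x ω - α • g ω)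
      ≤ f (x ω) - α * ⟪a ω, g ω⟫ + L / 2 * α ^ 2 * ‖g ω‖ ^ 2 := by
    intro ω
    have := image_add_le_of_lipschitzWith_gradient hf hLip (x ω) (-(α • g ω))
    rwa [← sub_eq_add_neg, inner_neg_right, real_inner_smul_right, norm_neg, norm_smul,
      mul_pow, Real.norm_eq_abs, sq_abs, ← mul_assoc, ← sub_eq_add_neg] at this
  have hfirst : Integrable (fun ω => f (x ω) - α * ⟪a ω, g ω⟫) μ := hfx.sub (hag.const_mul α)
  have hquad : Integrable (fun ω => L / 2 * α ^ 2 * ‖g ω‖ ^ 2) μ :=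
    (hg.integrable_norm_pow two_ne_zero).const_mul _
  have hcoef : 0 ≤ (L : ℝ) / 2 * α ^ 2 := by positivity
  calc ∫ ω, f (x ω - α • g ω) ∂μ
      ≤ ∫ ω, (f (x ω) - α * ⟪a ω, g ω⟫ + L / 2 * α ^ 2 * ‖g ω‖ ^ 2) ∂μ :=
        integral_mono hfx' (hfirst.add hquad) hpointwise
    _ = ∫ ω, f (x ω) ∂μ - α * ∫ ω, ‖a ω‖ ^ 2 ∂μ + L / 2 * α ^ 2 * ∫ ω, ‖g ω‖ ^ 2 ∂μ := by
        rw [integral_add hfirst hquad, integral_sub hfx (hag.const_mul α), integral_const_mul,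
          integral_const_mul, hinner]
    _ ≤ _ := by nlinarith [mul_le_mul_of_nonneg_left hsecond hcoef]

end SGDStep

section Telescoping

open Finset

theorem sum_Ico_le_of_le_sub_succ {F d : ℕ → ℝ} {m : ℕ} {c : ℝ} (hF : ∀ k, c ≤ F k)
    (hd : ∀ k, m ≤ k → d k ≤ F k - F (k + 1)) (n : ℕ) :
    ∑ k ∈ Ico m n, d k ≤ F m - c := by
  rcases le_total m n with hmn | hnm
  · calc ∑ k ∈ Ico m n, d k
        ≤ ∑ k ∈ Ico m n, -(F (k + 1) - F k) :=
          sum_le_sum fun k hk => (hd k (mem_Ico.1 hk).1).trans_eq (neg_sub _ _).symm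
      _ = F m - F n := by rw [sum_neg_distrib, sum_Ico_sub F hmn, neg_sub]
      _ ≤ F m - c := by linarith [hF n]
  · rw [Ico_eq_empty_of_le hnm, sum_empty, sub_nonneg]
    exact hF m

theorem sum_range_le_sum_range_add_sum_Ico {M : Type*} [AddCommMonoid M] [PartialOrder M]
    [IsOrderedAddMonoid M] {a : ℕ → M} (ha : ∀ k, 0 ≤ a k) (m n : ℕ) :
    ∑ k ∈ range n, a k ≤ ∑ k ∈ range m, a k + ∑ k ∈ Ico m n, a k := by
  rcases le_total m n with hmn | hnm
  · exact (sum_range_add_sum_Ico a hmn).ge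
  · rw [Ico_eq_empty_of_le hnm, sum_empty, add_zero]
    exact sum_le_sum_of_subset_of_nonneg (range_subset_range.2 hnm) fun k _ _ => ha k

theorem exists_average_le_of_descent {F G α : ℕ → ℝ} {L s fstar : ℝ} {k₀ : ℕ} (hL : 0 < L)
    (hs : 0 ≤ s) (hα : ∀ k, 0 < α k) (hmono : Antitone α) (hk₀ : α k₀ < 2 / L)
    (hF : ∀ k, fstar ≤ F k) (hG : ∀ k, 0 ≤ G k)
    (hstep : ∀ k, F (k + 1) ≤ F k - α k * (1 - L * α k / 2) * G k + L * α k ^ 2 / 2 * s) :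
    ∃ C₁ > (0 : ℝ), ∃ C₂ > (0 : ℝ), ∀ K : ℕ, 1 ≤ K →
      (1 / (K : ℝ)) * ∑ k ∈ range K, G k
        ≤ (C₁ + C₂ * s * ∑ k ∈ range K, α k ^ 2) * (1 / ((K : ℝ) * α (K - 1))) := by
  have hc : 0 < 1 - L * α k₀ / 2 := by nlinarith [(lt_div_iff₀ hL).1 hk₀]
  set c := 1 - L * α k₀ / 2 with hc_def
  have hαG : ∀ k, 0 ≤ α k * G k := fun k => mul_nonneg (hα k).le (hG k)
  have hweighted : ∀ K, ∑ k ∈ range K, α k * G k ≤ ∑ k ∈ range k₀, α k * G k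
      + ((F k₀ - fstar) + L * s / 2 * ∑ k ∈ range K, α k ^ 2) / c := by
    intro K
    have htail := sum_Ico_le_of_le_sub_succ hF (m := k₀)
      (d := fun k => c * (α k * G k) - L * s / 2 * α k ^ 2) (fun k hk => by
        have hck : c ≤ 1 - L * α k / 2 := by nlinarith [hmono hk, hc_def]
        nlinarith [mul_le_mul_of_nonneg_right hck (hαG k), hstep k]) K
    rw [sum_sub_distrib, ← mul_sum, ← mul_sum] at htail
    have hsq : ∑ k ∈ Ico k₀ K, α k ^ 2 ≤ ∑ k ∈ range K, α k ^ 2 :=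
      sum_le_sum_of_subset_of_nonneg (fun k hk => mem_range.2 (mem_Ico.1 hk).2)
        fun k _ _ => sq_nonneg _
    have hLs : 0 ≤ L * s / 2 := by positivity
    have hIco : ∑ k ∈ Ico k₀ K, α k * G k
        ≤ ((F k₀ - fstar) + L * s / 2 * ∑ k ∈ range K, α k ^ 2) / c := by
      rw [le_div_iff₀' hc]
      linarith [mul_le_mul_of_nonneg_left hsq hLs]
    linarith [sum_range_le_sum_range_add_sum_Ico hαG k₀ K]
  have hC₁ : 0 < ∑ k ∈ range k₀, α k * G k + (F k₀ - fstar) / c + 1 := by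
    have := div_nonneg (sub_nonneg.2 (hF k₀)) hc.le
    linarith [sum_nonneg fun k (_ : k ∈ range k₀) => hαG k]
  refine ⟨_, hC₁, L / (2 * c), by positivity, fun K hK => ?_⟩
  have hK_pos : (0 : ℝ) < K := by exact_mod_cast hK
  have hlast : α (K - 1) * ∑ k ∈ range K, G k ≤ ∑ k ∈ range K, α k * G k := by
    rw [mul_sum]
    exact sum_le_sum fun k hk =>
      mul_le_mul_of_nonneg_right (hmono (Nat.le_sub_one_of_lt (mem_range.1 hk))) (hG k)
  have hsplit : ((F k₀ - fstar) + L * s / 2 * ∑ k ∈ range K, α k ^ 2) / c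
      = (F k₀ - fstar) / c + L / (2 * c) * s * ∑ k ∈ range K, α k ^ 2 := by
    field_simp
  calc (1 / (K : ℝ)) * ∑ k ∈ range K, G k
      = α (K - 1) * (∑ k ∈ range K, G k) / (α (K - 1) * K) := by
        rw [mul_div_mul_left _ _ (hα _).ne', one_div_mul_eq_div]
    _ ≤ (∑ k ∈ range k₀, α k * G k + (F k₀ - fstar) / c + 1
          + L / (2 * c) * s * (∑ k ∈ range K, α k ^ 2)) / (α (K - 1) * K) := by
        refine div_le_div_of_nonneg_right ?_ (mul_pos (hα _) hK_pos).le
        linarith [hweighted K]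
    _ = _ := by rw [mul_comm (α _), div_eq_mul_one_div]

end Telescoping

theorem rsgd_monotone_step_sum_bound_general
    {Ω : Type*} [MeasureSpace Ω] [IsProbabilityMeasure (ℙ : Measure Ω)]
    {H : Type*} [NormedAddCommGroup H] [InnerProductSpace ℝ H] [CompleteSpace H]
    (𝓕 : Filtration ℕ (inferInstance : MeasurableSpace Ω))
    (f : H → ℝ) (hf : ContDiff ℝ 1 f)
    (L : ℝ) (hL : 0 < L) (hLip : LipschitzWith L.toNNReal (gradient f))
    (fstar : ℝ) (hbdd : ∀ y, fstar ≤ f y)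
    (α : ℕ → ℝ) (hα : ∀ k, 0 < α k)
    (b : ℕ) (σ2 : ℝ) (hσ2 : 0 ≤ σ2)
    (g : ℕ → Ω → H)
    (hg_L2 : ∀ k, MemLp (g k) 2 ℙ)
    (x : ℕ → Ω → H)
    (hxrec : ∀ k, x (k + 1) = fun ω => x k ω - α k • g k ω)
    (hx_meas : ∀ k, StronglyMeasurable[𝓕 k] (x k))
    (hg_mean : ∀ k, condExp (𝓕 k) ℙ (g k) =ᵐ[ℙ] fun ω => gradient f (x k ω))
    (hg_var : ∀ k, ∀ᵐ ω ∂ℙ,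
      condExp (𝓕 k) ℙ (fun ω' => ‖g k ω' - gradient f (x k ω')‖ ^ 2) ω ≤ σ2 / b)
    (hgrad_int : ∀ k, Integrable (fun ω => ‖gradient f (x k ω)‖ ^ 2) ℙ)
    (hf_int : ∀ k, Integrable (fun ω => f (x k ω)) ℙ)
    (hmono : Antitone α)
    (k₀ : ℕ) (hk₀ : α k₀ < 2 / L) :
    ∃ C₁ > (0 : ℝ), ∃ C₂ > (0 : ℝ), ∀ K : ℕ, 1 ≤ K →
      (1 / (K : ℝ)) * ∑ k ∈ Finset.range K, ∫ ω, ‖gradient f (x k ω)‖ ^ 2 ∂ℙ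
        ≤ (C₁ + C₂ * σ2 / b * ∑ k ∈ Finset.range K, α k ^ 2)
          * (1 / ((K : ℝ) * α (K - 1))) := by
  have hstep : ∀ k, ∫ ω, f (x (k + 1) ω) ∂ℙ ≤ ∫ ω, f (x k ω) ∂ℙ
      - α k * (1 - L * α k / 2) * ∫ ω, ‖gradient f (x k ω)‖ ^ 2 ∂ℙ
      + L * α k ^ 2 / 2 * (σ2 / b) := by
    intro k
    have hf_next := hf_int (k + 1)
    simp only [hxrec k] at hf_next ⊢
    simpa only [Real.coe_toNNReal L hL.le] using
      integral_sgd_step_le (𝓕.le k) (hf.differentiable one_ne_zero) hLip (α k) (σ2 / b)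
        (hx_meas k) (hg_L2 k) (hgrad_int k) (hg_mean k) (hg_var k) (hf_int k) hf_next
  have hF : ∀ k, fstar ≤ ∫ ω, f (x k ω) ∂ℙ := fun k => by
    simpa using integral_mono (integrable_const fstar) (hf_int k) fun ω => hbdd (x k ω)
  obtain ⟨C₁, hC₁, C₂, hC₂, hbound⟩ := exists_average_le_of_descent hL
    (div_nonneg hσ2 b.cast_nonneg) hα hmono hk₀ hF
    (fun k => integral_nonneg fun ω => sq_nonneg _) hstep
  refine ⟨C₁, hC₁, C₂, hC₂, fun K hK => ?_⟩
  simpa only [mul_div_assoc] using hbound K hK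

/-- Theorem 2 (second assertion) of the paper in the Euclidean/Hilbert setting:
for RSGD with monotone nonincreasing step sizes in `(0,1)`, some of which lie
below `2/L`, there exist `C₁, C₂ > 0` such that for every `K ≥ 1`,
`(1/K) ∑_{k<K} E[‖∇f(x_k)‖²] ≤ (C₁ + (C₂σ²/b) ∑_{k<K} α_k²) / (K α_{K−1})`. -/
theorem rsgd_monotone_step_sum_bound
    {Ω : Type*} [MeasureSpace Ω] [IsProbabilityMeasure (ℙ : Measure Ω)]
    {H : Type*} [NormedAddCommGroup H] [InnerProductSpace ℝ H] [CompleteSpace H]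
    (𝓕 : Filtration ℕ (inferInstance : MeasurableSpace Ω))
    (f : H → ℝ) (hf : ContDiff ℝ 1 f)
    (L : ℝ) (hL : 0 < L) (hLip : LipschitzWith L.toNNReal (gradient f))
    (fstar : ℝ) (hbdd : ∀ y, fstar ≤ f y)
    (x₀ : H) (α : ℕ → ℝ) (hα : ∀ k, 0 < α k)
    (b : ℕ) (hb : 1 ≤ b) (σ2 : ℝ) (hσ2 : 0 ≤ σ2)
    (g : ℕ → Ω → H)
    (hg_meas : ∀ k, StronglyMeasurable[𝓕 (k + 1)] (g k))
    (hg_L2 : ∀ k, MemLp (g k) 2 ℙ)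
    (x : ℕ → Ω → H)
    (hx0 : x 0 = fun _ => x₀)
    (hxrec : ∀ k, x (k + 1) = fun ω => x k ω - α k • g k ω)
    (hx_meas : ∀ k, StronglyMeasurable[𝓕 k] (x k))
    (hg_mean : ∀ k, condExp (𝓕 k) ℙ (g k) =ᵐ[ℙ] fun ω => gradient f (x k ω))
    (hg_var : ∀ k, ∀ᵐ ω ∂ℙ,
      condExp (𝓕 k) ℙ (fun ω' => ‖g k ω' - gradient f (x k ω')‖ ^ 2) ω ≤ σ2 / b)
    (hx_int : ∀ k, Integrable (fun ω => ‖x k ω‖ ^ 2) ℙ)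
    (hgrad_int : ∀ k, Integrable (fun ω => ‖gradient f (x k ω)‖ ^ 2) ℙ)
    (hf_int : ∀ k, Integrable (fun ω => f (x k ω)) ℙ)
    (hα1 : ∀ k, α k < 1) (hmono : Antitone α)
    (k₀ : ℕ) (hk₀ : α k₀ < 2 / L) :
    ∃ C₁ > (0 : ℝ), ∃ C₂ > (0 : ℝ), ∀ K : ℕ, 1 ≤ K →
      (1 / (K : ℝ)) * ∑ k ∈ Finset.range K, ∫ ω, ‖gradient f (x k ω)‖ ^ 2 ∂ℙ
        ≤ (C₁ + C₂ * σ2 / b * ∑ k ∈ Finset.range K, α k ^ 2)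
          * (1 / ((K : ℝ) * α (K - 1))) :=
  rsgd_monotone_step_sum_bound_general 𝓕 f hf L hL hLip fstar hbdd α hα b σ2 hσ2 g hg_L2 x hxrec
    hx_meas hg_mean hg_var hgrad_int hf_int hmono k₀ hk₀
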